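/- Let Π.φ be a QCNF and let e be an existential variable such that the literals e and ē lie in the same strongly connected component of the binary implication graph G_φ (i.e. G_φ has a path from e to ē and a path from ē to e). Then Π.φ has a QU-resolution refutation. -/
import Mathlib


/-!
Framework for prenex QCNF: variables are natural numbers; a quantifier prefix is
given by `ex : Var → Bool` (`ex v = true` iff variable `v` is existential), and
the prefix order on variables (hence on literals) is `<` on ℕ.
-/

abbrev Var := ℕ

/-- A literal: a variable together with a polarity (`pos = true` for `x`, `false` for `x̄`). -/
structure Lit where
  var : Var
  pos : Bool
deriving DecidableEq

/-- The complementary literal. -/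
def Lit.neg (l : Lit) : Lit := ⟨l.var, !l.pos⟩

/-- Clauses (disjunctions) and terms (conjunctions) are finite sets of literals. -/
abbrev Clause := Finset Lit
abbrev Term := Finset Lit

/-- A set of literals contains no complementary pair. -/
def LitSetOk (C : Finset Lit) : Prop := ∀ l ∈ C, l.neg ∉ C

instance (C : Finset Lit) : Decidable (LitSetOk C) :=
  inferInstanceAs (Decidable (∀ l ∈ C, l.neg ∉ C))

/-- The resOf on pivot literal `p` (used both for clauses and for terms). -/
def resOf (p : Lit) (A B : Finset Lit) : Finset Lit := A.erase p ∪ B.erase p.neg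

/-- Resolution of `A` (containing `p`) with `B` (containing `p.neg`) is defined: the
union of the side literals contains no complementary pair and neither `p` nor `p.neg`. -/
def ResOk (p : Lit) (A B : Finset Lit) : Prop :=
  p ∈ A ∧ p.neg ∈ B ∧ p ∉ resOf p A B ∧ p.neg ∉ resOf p A B ∧
    LitSetOk (resOf p A B)

instance (p : Lit) (A B : Finset Lit) : Decidable (ResOk p A B) :=
  inferInstanceAs (Decidable (p ∈ A ∧ p.neg ∈ B ∧ p ∉ resOf p A B ∧
    p.neg ∉ resOf p A B ∧ LitSetOk (resOf p A B)))

/-- ∀-reduction: `C'` results from `C` by removing every universal literal `l` such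
that no existential literal `k ∈ C` satisfies `l < k`. -/
def IsForallReduct (ex : Var → Bool) (C C' : Clause) : Prop :=
  ∀ l : Lit, l ∈ C' ↔ l ∈ C ∧ (ex l.var = true ∨ ∃ k ∈ C, ex k.var = true ∧ l.var < k.var)

/-- QU-resolution proofs of a clause from the matrix `φ` under the prefix `ex`:
every clause is in `φ`, or a QU-resOf of two earlier clauses (the pivot may be
universal), or results from an earlier clause by ∀-reduction. -/
inductive QUProof (ex : Var → Bool) (φ : Finset Clause) : Clause → Prop
  | ax {C : Clause} : C ∈ φ → QUProof ex φ C
  | res {A B : Clause} {p : Lit} : QUProof ex φ A → QUProof ex φ B → ResOk p A B →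
      QUProof ex φ (resOf p A B)
  | red {C C' : Clause} : QUProof ex φ C → IsForallReduct ex C C' → QUProof ex φ C'

/-- ∃-reduction: `T'` results from `T` by removing every existential literal `l` such
that no universal literal `k ∈ T` satisfies `l < k`. -/
def IsExistsReduct (ex : Var → Bool) (T T' : Term) : Prop :=
  ∀ l : Lit, l ∈ T' ↔ l ∈ T ∧ (ex l.var = false ∨ ∃ k ∈ T, ex k.var = false ∧ l.var < k.var)

/-- Model generation rule: `T` is generated from the matrix `φ` if every clause of `φ`
contains a literal belonging to `T`. -/
def ModelGen (φ : Finset Clause) (T : Term) : Prop := ∀ C ∈ φ, ∃ l ∈ C, l ∈ T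

/-- `π` is a term-resolution proof of the term `T` from the QCNF with prefix `ex` and
matrix `φ`: a finite sequence of terms ending in `T`, each generated by model
generation or obtained from earlier terms by ∃-reduction or term-resolution. -/
def IsTermResProof (ex : Var → Bool) (φ : Finset Clause) (π : List Term) (T : Term) : Prop :=
  π ≠ [] ∧ π.getLast? = some T ∧
    ∀ i : Fin π.length, LitSetOk (π.get i) ∧
      (ModelGen φ (π.get i) ∨
        (∃ j : Fin π.length, j < i ∧ IsExistsReduct ex (π.get j) (π.get i)) ∨
        (∃ j k : Fin π.length, j < i ∧ k < i ∧ ∃ p : Lit,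
          ResOk p (π.get j) (π.get k) ∧ π.get i = resOf p (π.get j) (π.get k)))

/-- Value of a literal under a total assignment. -/
def evalLit (σ : Var → Bool) (l : Lit) : Bool := if l.pos then σ l.var else !σ l.var

/-- A strategy assigns to each (existential) variable a Boolean function of the
universal assignment — the semantic counterpart of a propositional formula. -/
abbrev Strategy := Var → (Var → Bool) → Bool

/-- The total assignment induced by a strategy `M` and a universal assignment `τ`. -/
def Strategy.assign (ex : Var → Bool) (M : Strategy) (τ : Var → Bool) : Var → Bool :=
  fun v => if ex v then M v τ else τ v

/-- The definition of each existential variable depends only on the universal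
variables preceding it in the prefix. -/
def WellFormed (ex : Var → Bool) (M : Strategy) : Prop :=
  ∀ e, ex e = true → ∀ τ τ' : Var → Bool,
    (∀ u, ex u = false → u < e → τ u = τ' u) → M e τ = M e τ'

/-- `M` is a model of the QCNF with prefix `ex` and matrix `φ`: it is a well-formed
strategy and `M(φ)` is a tautology. -/
def IsModel (ex : Var → Bool) (φ : Finset Clause) (M : Strategy) : Prop :=
  WellFormed ex M ∧
    ∀ τ : Var → Bool, ∀ C ∈ φ, ∃ l ∈ C, evalLit (Strategy.assign ex M τ) l = true

/-- A term `T` agrees with an assignment `τ` to the universal variables iff there is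
no (universal) literal `l` with `l̄ ∈ T` and `τ(l) = 1`. -/
def Agrees (ex : Var → Bool) (τ : Var → Bool) (T : Term) : Prop :=
  ¬∃ l : Lit, ex l.var = false ∧ l.neg ∈ T ∧ evalLit τ l = true

/-- Edge `a → b` of the binary implication graph of `φ`: the binary clause
`a.neg ∨ b` is in `φ` (a clause `l₁ ∨ l₂` yields the edges `l̄₁ → l₂`, `l̄₂ → l₁`). -/
def ImpEdge (φ : Finset Clause) (a b : Lit) : Prop :=
  a ≠ b ∧ a.neg ≠ b ∧ ({a.neg, b} : Clause) ∈ φ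

/-- The existential literal `l` of the clause `C` is blocked in the matrix `φ`. -/
def BlockedIn (ex : Var → Bool) (φ : Finset Clause) (C : Clause) (l : Lit) : Prop :=
  ex l.var = true ∧ l ∈ C ∧ ∀ D ∈ φ, l.neg ∈ D → ∃ k ∈ C, k.var < l.var ∧ k.neg ∈ D

/-- One step of blocked clause elimination: remove one blocked clause. -/
def BCEStep (ex : Var → Bool) (φ φ' : Finset Clause) : Prop :=
  ∃ C ∈ φ, (∃ l, BlockedIn ex φ C l) ∧ φ' = φ.erase C

/-- The side-condition for eliminating the existential variable `x` from the matrix `φ`. -/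
def VEside (x : Var) (φ : Finset Clause) : Prop :=
  ∀ C ∈ φ, (⟨x, true⟩ : Lit) ∈ C → (∃ k ∈ C, x < k.var) →
    ∀ D ∈ φ, (⟨x, false⟩ : Lit) ∈ D → ∃ z ∈ C, z.var < x ∧ z.neg ∈ D

/-- The set of all defined resolvents on `x` between the clauses of `φ` containing the
literal `x` and those containing `x̄`. -/
def VEresolvents (x : Var) (φ : Finset Clause) : Finset Clause :=
  ((φ ×ˢ φ).filter fun q => ResOk ⟨x, true⟩ q.1 q.2).image
    fun q => resOf ⟨x, true⟩ q.1 q.2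

/-- Variable elimination of `x`: replace all clauses mentioning `x` by all defined
resolvents on `x`. -/
def VEapply (x : Var) (φ : Finset Clause) : Finset Clause :=
  φ.filter (fun C => (⟨x, true⟩ : Lit) ∉ C ∧ (⟨x, false⟩ : Lit) ∉ C) ∪ VEresolvents x φ

/-- The variables of Φₙ (0-indexed): `uᵢ` is variable `2*i`, `eᵢ` is variable `2*i+1`,
so the prefix `∀u₀∃e₀…∀u_{n-1}∃e_{n-1}` is the natural order. -/
def uLit (i : ℕ) (b : Bool) : Lit := ⟨2 * i, b⟩
def eLit (i : ℕ) (b : Bool) : Lit := ⟨2 * i + 1, b⟩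

/-- The prefix of Φₙ: even variables universal, odd variables existential. -/
def phiEx : Var → Bool := fun v => v % 2 == 1

/-- The clause `ūᵢ ∨ eᵢ`. -/
def posClause (i : ℕ) : Clause := {uLit i false, eLit i true}
/-- The clause `uᵢ ∨ ēᵢ`. -/
def negClause (i : ℕ) : Clause := {uLit i true, eLit i false}

/-- The matrix of Φₙ: `⋀_{i<n} (ūᵢ ∨ eᵢ) ∧ (uᵢ ∨ ēᵢ)`. -/
def PhiMatrix (n : ℕ) : Finset Clause :=
  (Finset.range n).biUnion fun i => {posClause i, negClause i}

/-- The set `W` of witnesses for the literal `l` being blocked in the clause `C`. -/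
def witnesses (φ : Finset Clause) (C : Clause) (l : Lit) : Finset Lit :=
  C.filter fun k => k ≠ l ∧ k.var < l.var ∧ ∃ D ∈ φ, k.neg ∈ D ∧ l.neg ∈ D

/-- `φ` with all literals not less than `x` deleted from each clause. -/
def restrictBelow (x : Var) (φ : Finset Clause) : Finset Clause :=
  φ.image fun C => C.filter fun l => l.var < x

lemma Lit.neg_neg' (l : Lit) : l.neg.neg = l := by
  cases l; simp [Lit.neg]

lemma Lit.neg_ne_self (l : Lit) : l.neg ≠ l := by
  cases l with
  | mk v p => simp [Lit.neg]

lemma Lit.neg_inj' {l k : Lit} (h : l.neg = k.neg) : l = k := by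
  have := congrArg Lit.neg h
  rwa [Lit.neg_neg', Lit.neg_neg'] at this

lemma chain_lemma (ex : Var → Bool) (φ : Finset Clause) (s b : Lit)
    (h : Relation.ReflTransGen (ImpEdge φ) s b) :
    QUProof ex φ ∅ ∨ QUProof ex φ {b} ∨
      (s ≠ b ∧ s.neg ≠ b ∧ QUProof ex φ {s.neg, b}) ∨ s = b := by
  induction h with
  | refl => exact Or.inr (Or.inr (Or.inr rfl))
  | @tail m t hsm hmt ih =>
    obtain ⟨hne, hne', hcl⟩ := hmt
    rcases ih with h0 | hu | ⟨h1, h2, hI⟩ | rfl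
    · exact Or.inl h0
    · -- unit {m} derived; resolve with clause {m.neg, t} on pivot m.neg
      refine Or.inr (Or.inl ?_)
      have hA : QUProof ex φ ({m.neg, t} : Clause) := .ax hcl
      have heq : resOf m.neg ({m.neg, t} : Clause) ({m} : Clause) = ({t} : Clause) := by
        ext l
        simp only [resOf, Finset.mem_union, Finset.mem_erase, Finset.mem_insert,
          Finset.mem_singleton, Lit.neg_neg']
        constructor
        · rintro (⟨h1, (rfl | rfl)⟩ | ⟨h1, rfl⟩) <;> simp_all
        · rintro rfl; exact Or.inl ⟨Ne.symm hne', Or.inr rfl⟩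
      have hres : ResOk m.neg ({m.neg, t} : Clause) ({m} : Clause) := by
        refine ⟨by simp, by simp [Lit.neg_neg'], ?_, ?_, ?_⟩
        · rw [heq]; simpa using hne'
        · rw [heq]; simp only [Lit.neg_neg']; simpa using hne
        · rw [heq]; intro l hl
          simp only [Finset.mem_singleton] at hl ⊢
          subst hl; exact Lit.neg_ne_self l
      have := QUProof.res hA hu hres
      rwa [heq] at this
    · -- clause {s.neg, m} derived; resolve with clause {m.neg, t} on pivot m
      by_cases hst : s = t
      · exact Or.inr (Or.inr (Or.inr hst))
      have hA : QUProof ex φ ({m.neg, t} : Clause) := .ax hcl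
      have hmns : m.neg ≠ s.neg := fun h => h1 (Lit.neg_inj' h).symm
      have heq : resOf m ({s.neg, m} : Clause) ({m.neg, t} : Clause)
          = ({s.neg, t} : Clause) := by
        ext l
        simp only [resOf, Finset.mem_union, Finset.mem_erase, Finset.mem_insert,
          Finset.mem_singleton]
        constructor
        · rintro (⟨h', (rfl | rfl)⟩ | ⟨h', (rfl | rfl)⟩) <;> simp_all
        · rintro (rfl | rfl)
          · exact Or.inl ⟨fun h => h2 h, Or.inl rfl⟩
          · exact Or.inr ⟨Ne.symm hne', Or.inr rfl⟩
      have hres : ResOk m ({s.neg, m} : Clause) ({m.neg, t} : Clause) := by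
        refine ⟨by simp, by simp, ?_, ?_, ?_⟩
        · rw [heq]; simpa using ⟨fun h => h2 h.symm, hne⟩
        · rw [heq]; simp [hmns, hne']
        · rw [heq]; intro l hl hl'
          simp only [Finset.mem_insert, Finset.mem_singleton] at hl hl'
          rcases hl with rfl | rfl
          · rcases hl' with h' | h'
            · exact Lit.neg_ne_self _ h'
            · rw [Lit.neg_neg'] at h'; exact hst h'
          · rcases hl' with h' | h'
            · exact hst (Lit.neg_inj' h').symm
            · exact Lit.neg_ne_self _ h'
      have hd := QUProof.res hI hA hres
      rw [heq] at hd
      by_cases hsnt : s.neg = t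
      · refine Or.inr (Or.inl ?_)
        rw [hsnt] at hd
        simpa using hd
      · exact Or.inr (Or.inr (Or.inl ⟨hst, hsnt, hd⟩))
    · -- s = m (path was trivial so far); edge gives clause directly
      exact Or.inr (Or.inr (Or.inl ⟨hne, hne', .ax hcl⟩))

theorem stmt17 (ex : Var → Bool) (φ : Finset Clause) (hok : ∀ C ∈ φ, LitSetOk C)
    (e : Var) (he : ex e = true)
    (p1 : Relation.ReflTransGen (ImpEdge φ) ⟨e, true⟩ ⟨e, false⟩)
    (p2 : Relation.ReflTransGen (ImpEdge φ) ⟨e, false⟩ ⟨e, true⟩) :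
    QUProof ex φ ∅ := by
  have hn1 : (⟨e, true⟩ : Lit).neg = ⟨e, false⟩ := by simp [Lit.neg]
  have hn2 : (⟨e, false⟩ : Lit).neg = ⟨e, true⟩ := by simp [Lit.neg]
  have hne : (⟨e, true⟩ : Lit) ≠ ⟨e, false⟩ := by simp
  have h1 := chain_lemma ex φ ⟨e, true⟩ ⟨e, false⟩ p1
  have h2 := chain_lemma ex φ ⟨e, false⟩ ⟨e, true⟩ p2
  rcases h1 with h0 | hu1 | ⟨_, hc, _⟩ | hc
  rotate_left 2
  · exact absurd (hn1 ▸ rfl) hc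
  · exact absurd hc hne
  · exact h0
  rcases h2 with h0 | hu2 | ⟨_, hc, _⟩ | hc
  rotate_left 2
  · exact absurd (hn2 ▸ rfl) hc
  · exact absurd hc.symm hne
  · exact h0
  have hres : ResOk ⟨e, true⟩ ({⟨e, true⟩} : Clause) ({⟨e, false⟩} : Clause) := by
    have heq : resOf (⟨e, true⟩ : Lit) ({⟨e, true⟩} : Clause) ({⟨e, false⟩} : Clause) = ∅ := by
      simp [resOf, hn1]
    exact ⟨by simp, by simp [hn1], by simp [heq], by simp [heq], by simp [heq, LitSetOk]⟩
  have := QUProof.res hu2 hu1 hres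
  have heq : resOf (⟨e, true⟩ : Lit) ({⟨e, true⟩} : Clause) ({⟨e, false⟩} : Clause) = ∅ := by
    simp [resOf, hn1]
  rwa [heq] at this
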